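/- arXiv:2203.02343 — 3 statements merged into one kernel-verified Lean document; each statement's English description precedes it below -/
import Mathlib

section
/- The approval-with-runoff rule MAV^R, which selects as finalists all pairs {x,y} maximizing S_V(x)+S_V(y) and then takes majority winners among each pair, is monotonic: if a ∈ MAV^R(P) and P' is an a-improvement of P, then a ∈ MAV^R(P'). -/
/-- A voter: an approval set together with a ranking of the candidates
(`rank x < rank y` means `x` is preferred to `y`). -/
structure Voter (C : Type*) where
  approves : Finset C
  rank : C → ℕ

variable {C : Type*} [DecidableEq C] {n : ℕ}

/-- Approval score of a candidate. -/
def appScore (P : Fin n → Voter C) (c : C) : ℕ :=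
  (Finset.univ.filter (fun i => c ∈ (P i).approves)).card

/-- Number of voters preferring `x` to `y`. -/
def majCount (P : Fin n → Voter C) (x y : C) : ℕ :=
  (Finset.univ.filter (fun i => (P i).rank x < (P i).rank y)).card

/-- Majority winners between `x` and `y` (both in case of a tie). -/
def maj (P : Fin n → Voter C) (x y : C) : Set C :=
  {z | (z = x ∧ majCount P y x ≤ majCount P x y) ∨
       (z = y ∧ majCount P x y ≤ majCount P y x)}

/-- MAV finalists: pairs of distinct candidates maximizing the sum of approval
scores. -/
def mavPairs (P : Fin n → Voter C) : Set (C × C) :=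
  {p | p.1 ≠ p.2 ∧
    ∀ x y : C, x ≠ y → appScore P x + appScore P y ≤ appScore P p.1 + appScore P p.2}

/-- MAV with runoff: majority winners among each MAV pair of finalists. -/
def mavR (P : Fin n → Voter C) : Set C :=
  {w | ∃ p ∈ mavPairs P, w ∈ maj P p.1 p.2}

/-- A voter is valid: injective ranking, ballot consistent with the ranking. -/
def ValidVoter (v : Voter C) : Prop :=
  Function.Injective v.rank ∧
    ∀ a ∈ v.approves, ∀ b, b ∉ v.approves → v.rank a < v.rank b

/-- `P'` is an `a`-improvement of `P`: one voter possibly adds `a` to her ballot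
and moves `a` up in her ranking, all other comparisons and voters unchanged. -/
def AImprovement (a : C) (P P' : Fin n → Voter C) : Prop :=
  ∃ i : Fin n, (∀ j, j ≠ i → P' j = P j) ∧
    ((P' i).approves = (P i).approves ∨ (P' i).approves = insert a (P i).approves) ∧
    (∀ x y, y ≠ a → ((P i).rank x < (P i).rank y → (P' i).rank x < (P' i).rank y))

/-- MAV-with-runoff is monotonic: if `a` wins and a voter improves `a`'s
standing, then `a` still wins. -/
theorem mavR_monotonic (P P' : Fin n → Voter C) (a : C)
    (hP : ∀ i, ValidVoter (P i)) (hP' : ∀ i, ValidVoter (P' i))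
    (himp : AImprovement a P P') (ha : a ∈ mavR P) :
    a ∈ mavR P' := by
  obtain ⟨i, hoth, happ, hrank⟩ := himp
  -- approval score facts
  have hSa : appScore P a ≤ appScore P' a := by
    apply Finset.card_le_card
    intro j hj
    simp only [Finset.mem_filter, Finset.mem_univ, true_and] at *
    by_cases hji : j = i
    · subst hji
      rcases happ with h | h <;> rw [h]
      · exact hj
      · exact Finset.mem_insert_of_mem hj
    · rw [hoth j hji]; exact hj
  have hSc : ∀ c, c ≠ a → appScore P' c = appScore P c := by
    intro c hc
    unfold appScore
    congr 1
    apply Finset.filter_congr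
    intro j _
    by_cases hji : j = i
    · subst hji
      rcases happ with h | h <;> rw [h]
      · simp [hc]
    · rw [hoth j hji]
  -- majority count facts
  have hmaj1 : ∀ y, y ≠ a → majCount P a y ≤ majCount P' a y := by
    intro y hy
    apply Finset.card_le_card
    intro j hj
    simp only [Finset.mem_filter, Finset.mem_univ, true_and] at hj ⊢
    by_cases hji : j = i
    · rw [hji] at hj ⊢; exact hrank a y hy hj
    · rw [hoth j hji]; exact hj
  have hmaj2 : ∀ y, y ≠ a → majCount P' y a ≤ majCount P y a := by
    intro y hy
    apply Finset.card_le_card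
    intro j hj
    simp only [Finset.mem_filter, Finset.mem_univ, true_and] at hj ⊢
    by_cases hji : j = i
    · rw [hji] at hj ⊢
      by_contra hcon
      push_neg at hcon
      have hne : (P i).rank a ≠ (P i).rank y := fun h => hy (((hP i).1 h).symm)
      have hlt : (P i).rank a < (P i).rank y := lt_of_le_of_ne hcon hne
      have := hrank a y hy hlt
      omega
    · rw [hoth j hji] at hj; exact hj
  obtain ⟨p, ⟨hpne, hpmax⟩, hmaj⟩ := ha
  -- extract the other finalist b, with a beating b and maximality for P
  obtain ⟨b, hbne, hbmaj, hbmax⟩ :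
      ∃ b, b ≠ a ∧ majCount P b a ≤ majCount P a b ∧
        ∀ x y : C, x ≠ y → appScore P x + appScore P y ≤ appScore P a + appScore P b := by
    rcases hmaj with ⟨heq, hle⟩ | ⟨heq, hle⟩
    · refine ⟨p.2, ?_, ?_, ?_⟩
      · rw [heq]; exact hpne.symm
      · rw [heq]; exact hle
      · intro x y hxy; rw [heq]; exact hpmax x y hxy
    · refine ⟨p.1, ?_, ?_, ?_⟩
      · rw [heq]; exact hpne
      · rw [heq]; exact hle
      · intro x y hxy; rw [heq]; have := hpmax x y hxy; omega
  have hSb : appScore P' b = appScore P b := hSc b hbne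
  refine ⟨(a, b), ⟨hbne.symm, ?_⟩, Or.inl ⟨rfl, ?_⟩⟩
  · intro x y hxy
    simp only
    by_cases hx : x = a
    · rw [hx] at hxy ⊢
      have hya : y ≠ a := fun h => hxy h.symm
      have h1 := hbmax a y hxy
      rw [hSc y hya, hSb]
      omega
    · by_cases hy : y = a
      · rw [hy] at hxy ⊢
        have h1 := hbmax x a hxy
        rw [hSc x hx, hSb]
        omega
      · rw [hSc x hx, hSc y hy, hSb]
        have h1 := hbmax x y hxy
        omega
  · calc majCount P' b a ≤ majCount P b a := hmaj2 b hbne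
      _ ≤ majCount P a b := hbmaj
      _ ≤ majCount P' a b := hmaj1 b hbne
end

section
/- The approval-with-runoff rule MAV^R is Pareto-efficient: if in an approval-preference profile P candidate a unanimously preference-approval dominates candidate b, then b is not a winner of MAV^R(P). -/
variable {C : Type*} [DecidableEq C] {n : ℕ}

/-- `a` unanimously preference-approval dominates `b`. -/
def Dominates (P : Fin n → Voter C) (a b : C) : Prop :=
  (∀ i, (P i).rank a < (P i).rank b) ∧
  ∃ i, a ∈ (P i).approves ∧ b ∉ (P i).approves

/-- MAV-with-runoff is Pareto-efficient: a dominated candidate never wins. -/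
theorem mavR_pareto (P : Fin n → Voter C) (a b : C)
    (hP : ∀ i, ValidVoter (P i)) (hdom : Dominates P a b) :
    b ∉ mavR P := by
  obtain ⟨hpref, j, hja, hjb⟩ := hdom
  have hab : a ≠ b := fun h => lt_irrefl _ (h ▸ hpref j)
  -- every approver of b approves a
  have happ : ∀ i, b ∈ (P i).approves → a ∈ (P i).approves := by
    intro i hb
    by_contra ha
    exact absurd ((hP i).2 b hb a ha) (not_lt.mpr (le_of_lt (hpref i)))
  -- strict score inequality
  have hscore : appScore P b < appScore P a := by
    unfold appScore
    apply Finset.card_lt_card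
    constructor
    · intro i hi
      simp only [Finset.mem_filter, Finset.mem_univ, true_and] at *
      exact happ i hi
    · intro hsub
      have := hsub (Finset.mem_filter.mpr ⟨Finset.mem_univ j, hja⟩)
      simp only [Finset.mem_filter] at this
      exact hjb this.2
  -- majority counts
  have hmba : majCount P b a = 0 := by
    unfold majCount
    rw [Finset.card_eq_zero, Finset.filter_eq_empty_iff]
    intro i _
    exact not_lt.mpr (le_of_lt (hpref i))
  have hmab : 0 < majCount P a b := by
    unfold majCount
    rw [Finset.card_pos]
    exact ⟨j, Finset.mem_filter.mpr ⟨Finset.mem_univ j, hpref j⟩⟩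
  rintro ⟨⟨p1, p2⟩, ⟨hne, hmax⟩, hmaj⟩
  simp only [maj, Set.mem_setOf_eq] at hmaj
  rcases hmaj with ⟨rfl, hle⟩ | ⟨rfl, hle⟩
  · -- b = p1
    by_cases hp2 : p2 = a
    · subst hp2
      omega
    · have := hmax a p2 (fun h => hp2 h.symm)
      dsimp only at this
      omega
  · by_cases hp1 : p1 = a
    · subst hp1
      omega
    · have := hmax p1 a hp1
      dsimp only at this
      omega
end

section
/- The AVR rule defined by the ABC rule F(V) = all pairs {a,b} such that either neither a nor b is dominated in V, or a is the unique candidate dominating b, is Pareto-efficient: if a dominates b in an approval-preference profile P, then b ∉ F^R(P). -/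
variable {C : Type*} [DecidableEq C] {n : ℕ}

/-- The ABC rule selecting all pairs `{x,y}` (of distinct candidates) such that
either neither `x` nor `y` is dominated, or one of them is dominated only by
the other. -/
def undomPairs (P : Fin n → Voter C) : Set (C × C) :=
  {p | p.1 ≠ p.2 ∧
    (((¬ ∃ z, Dominates P z p.1) ∧ (¬ ∃ z, Dominates P z p.2)) ∨
     (Dominates P p.1 p.2 ∧ ∀ z, Dominates P z p.2 → z = p.1) ∨
     (Dominates P p.2 p.1 ∧ ∀ z, Dominates P z p.1 → z = p.2))}

/-- The runoff rule induced by `undomPairs`. -/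
def undomR (P : Fin n → Voter C) : Set C :=
  {w | ∃ p ∈ undomPairs P, w ∈ maj P p.1 p.2}


lemma dom_trans (P : Fin n → Voter C) (hP : ∀ i, ValidVoter (P i)) {a b c : C}
    (h1 : Dominates P a b) (h2 : Dominates P b c) : Dominates P a c := by
  refine ⟨fun i => (h1.1 i).trans (h2.1 i), ?_⟩
  obtain ⟨i, ha, hb⟩ := h1.2
  refine ⟨i, ha, fun hc => ?_⟩
  exact absurd (h2.1 i) (not_lt.mpr ((hP i).2 c hc b hb).le)

lemma dom_counts (P : Fin n → Voter C) {u v : C} (h : Dominates P u v) :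
    majCount P v u = 0 ∧ 0 < majCount P u v := by
  constructor
  · simp only [majCount, Finset.card_eq_zero, Finset.filter_eq_empty_iff]
    intro i _
    exact not_lt.mpr (h.1 i).le
  · obtain ⟨i, _⟩ := h.2
    refine Finset.card_pos.mpr ⟨i, ?_⟩
    simp [h.1 i]

lemma dom_ne (P : Fin n → Voter C) {u v : C} (h : Dominates P u v) : u ≠ v := by
  obtain ⟨i, _⟩ := h.2
  exact fun huv => lt_irrefl _ (huv ▸ h.1 i)

/-- The runoff rule induced by `undomPairs` is Pareto-efficient: a dominated
candidate never wins. -/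
theorem undomR_pareto (P : Fin n → Voter C) (a b : C)
    (hP : ∀ i, ValidVoter (P i)) (hdom : Dominates P a b) :
    b ∉ undomR P := by
  rintro ⟨⟨x, y⟩, ⟨hne, hcase⟩, hmaj⟩
  simp only [maj, Set.mem_setOf_eq] at hmaj
  dsimp only at hmaj hcase
  rcases hcase with ⟨hx, hy⟩ | ⟨hxy, huniq⟩ | ⟨hyx, huniq⟩
  · rcases hmaj with ⟨rfl, _⟩ | ⟨rfl, _⟩
    · exact hx ⟨a, hdom⟩
    · exact hy ⟨a, hdom⟩
  · rcases hmaj with ⟨rfl, _⟩ | ⟨rfl, hc⟩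
    · -- b = x, b dominates y, a dominates y by transitivity, so a = b
      exact dom_ne P hdom (huniq a (dom_trans P hP hdom hxy))
    · -- b = y, x dominates b, count contradiction
      obtain ⟨h0, hpos⟩ := dom_counts P hxy
      omega
  · rcases hmaj with ⟨rfl, hc⟩ | ⟨rfl, _⟩
    · -- b = x, y dominates b, count contradiction
      obtain ⟨h0, hpos⟩ := dom_counts P hyx
      omega
    · -- b = y, b dominates x, a dominates x, so a = b
      exact dom_ne P hdom (huniq a (dom_trans P hP hdom hyx))
end
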